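/- arXiv:2210.04750 — 4 statements merged into one kernel-verified Lean document; each statement's English description precedes it below -/
import Mathlib

section
/- For every x₀ > 0, α > 0 and λ > 0, one has the integral relation ∫₀^{x₀} 𝓔_α(λ^{1/α} x) dx = λ^{−1/α} [E_α(−λ x₀^α) − 1]. -/
open MeasureTheory Real Filter Nat

/-- The integrand series terms. -/
noncomputable def Fa (α c : ℝ) (k : ℕ) (x : ℝ) : ℝ :=
  (-1 : ℝ) ^ k * k * α * c ^ (α * k - 1) * x ^ (α * k - 1) / Real.Gamma (α * k + 1)

lemma Fa_zero (α c : ℝ) : Fa α c 0 = fun _ => (0 : ℝ) := by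
  funext x; simp [Fa]

lemma Fa_succ (α c : ℝ) (k : ℕ) : Fa α c (k + 1) = fun x : ℝ =>
    ((-1 : ℝ) ^ (k + 1) * ((k : ℝ) + 1) * α * c ^ (α * ((k : ℝ) + 1) - 1) /
      Real.Gamma (α * ((k : ℝ) + 1) + 1)) * x ^ (α * ((k : ℝ) + 1) - 1) := by
  funext x
  simp only [Fa]
  push_cast
  ring

lemma norm_Fa {α c : ℝ} (hα : 0 < α) (hc : 0 < c) (k : ℕ) {x : ℝ} (hx : 0 < x) :
    ‖Fa α c k x‖ =
      ((k : ℝ) * α * c ^ (α * k - 1) / Real.Gamma (α * k + 1)) * x ^ (α * k - 1) := by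
  have hΓ : 0 < Real.Gamma (α * k + 1) := Real.Gamma_pos_of_pos (by positivity)
  have h1 : 0 < c ^ (α * k - 1) := Real.rpow_pos_of_pos hc _
  have h2 : 0 < x ^ (α * k - 1) := Real.rpow_pos_of_pos hx _
  simp only [Fa, Real.norm_eq_abs, abs_div, abs_mul, abs_pow, abs_neg, abs_one, one_pow,
    one_mul, Nat.abs_cast, abs_of_pos hΓ, abs_of_pos h1, abs_of_pos h2, abs_of_pos hα]
  ring

lemma integral_rpow_Ioc {x₀ : ℝ} (hx₀ : 0 < x₀) {p : ℝ} (hp : -1 < p) :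
    ∫ x in Set.Ioc (0:ℝ) x₀, x ^ p = x₀ ^ (p + 1) / (p + 1) := by
  rw [← intervalIntegral.integral_of_le hx₀.le, integral_rpow (Or.inl hp),
    Real.zero_rpow (by linarith : p + 1 ≠ 0)]
  ring

lemma integrableOn_Fa {α c x₀ : ℝ} (hα : 0 < α) (hx₀ : 0 < x₀) (k : ℕ) :
    IntegrableOn (Fa α c k) (Set.Ioc (0:ℝ) x₀) := by
  cases k with
  | zero => rw [Fa_zero]; exact integrable_zero _ _ _
  | succ k =>
    have hp : (-1 : ℝ) < α * ((k : ℝ) + 1) - 1 := by nlinarith [hα.le, k.cast_nonneg (α := ℝ)]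
    rw [Fa_succ]
    exact ((intervalIntegral.intervalIntegrable_rpow' hp).1).const_mul _

lemma integral_Fa_succ {α c x₀ : ℝ} (hα : 0 < α) (hx₀ : 0 < x₀) (k : ℕ) :
    ∫ x in Set.Ioc (0:ℝ) x₀, Fa α c (k + 1) x =
      (-1 : ℝ) ^ (k + 1) * c ^ (α * ((k : ℝ) + 1) - 1) * x₀ ^ (α * ((k : ℝ) + 1)) /
        Real.Gamma (α * ((k : ℝ) + 1) + 1) := by
  have hm : (0 : ℝ) < α * ((k : ℝ) + 1) := by positivity
  have hp : (-1 : ℝ) < α * ((k : ℝ) + 1) - 1 := by linarith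
  have hΓ : 0 < Real.Gamma (α * ((k : ℝ) + 1) + 1) := Real.Gamma_pos_of_pos (by positivity)
  rw [Fa_succ, MeasureTheory.integral_const_mul, integral_rpow_Ioc hx₀ hp]
  rw [show α * ((k : ℝ) + 1) - 1 + 1 = α * ((k : ℝ) + 1) by ring]
  field_simp


lemma summable_aux {α : ℝ} (hα : 0 < α) {s : ℝ} (hs : 0 ≤ s) :
    Summable (fun k : ℕ => ((k : ℝ) + 1) * s ^ k / Real.Gamma (α * k + 1)) := by
  set v : ℝ := max 1 (s ^ α⁻¹) with hv
  have hv1 : (1 : ℝ) ≤ v := le_max_left _ _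
  have hv0 : (0 : ℝ) ≤ v := zero_le_one.trans hv1
  set r : ℝ := (2 : ℝ) ^ (-α) with hr
  have hr0 : 0 ≤ r := (Real.rpow_pos_of_pos two_pos _).le
  have hr1 : r < 1 := Real.rpow_lt_one_of_one_lt_of_neg one_lt_two (neg_neg_of_pos hα)
  set C : ℝ := 2 * v * Real.exp (2 * v) with hC
  have hC0 : 0 ≤ C := by positivity
  -- the comparison series is summable
  have hg : Summable (fun m : ℕ => ((m : ℝ) + 1) * C * r ^ m) := by
    have h1 : Summable (fun m : ℕ => (m : ℝ) ^ 1 * r ^ m) :=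
      summable_pow_mul_geometric_of_norm_lt_one 1 (by rwa [Real.norm_eq_abs, abs_of_nonneg hr0])
    have h2 : Summable (fun m : ℕ => r ^ m) := summable_geometric_of_lt_one hr0 hr1
    have := ((h1.add h2).mul_left C)
    refine this.congr fun m => ?_
    ring
  -- choose N with 1 ≤ α * N
  set N : ℕ := ⌈α⁻¹⌉₊ + 1 with hN
  have hαN : 1 ≤ α * N := by
    have h1 : α⁻¹ ≤ (N : ℝ) := by
      have := Nat.le_ceil α⁻¹
      push_cast [hN]
      linarith
    calc (1:ℝ) = α * α⁻¹ := by field_simp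
    _ ≤ α * N := by gcongr
  rw [← summable_nat_add_iff N]
  refine Summable.of_nonneg_of_le (fun k => ?_) (fun k => ?_)
    ((summable_nat_add_iff N).mpr hg)
  · have := Real.Gamma_pos_of_pos (show 0 < α * (k + N : ℕ) + 1 by positivity)
    positivity
  · set m : ℕ := k + N with hm
    have hαm : 1 ≤ α * m := by
      calc (1:ℝ) ≤ α * N := hαN
      _ ≤ α * m := by gcongr; exact_mod_cast Nat.le_add_left N k
    have hαm0 : 0 ≤ α * m := zero_le_one.trans hαm
    set n : ℕ := ⌊α * m⌋₊ with hn
    have hn1 : 1 ≤ n := Nat.le_floor (by exact_mod_cast hαm)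
    have hfl : (n : ℝ) ≤ α * m := Nat.floor_le hαm0
    have hfu : α * m < n + 1 := Nat.lt_floor_add_one _
    have hΓpos : 0 < Real.Gamma (α * m + 1) := Real.Gamma_pos_of_pos (by positivity)
    -- Gamma lower bound by factorial
    have hΓ : (n ! : ℝ) ≤ Real.Gamma (α * m + 1) := by
      have h0 : ((n : ℝ) + 1) ∈ Set.Ici (2:ℝ) := by
        simp only [Set.mem_Ici]
        have : (1:ℝ) ≤ n := by exact_mod_cast hn1
        linarith
      have h1 : (α * m + 1) ∈ Set.Ici (2:ℝ) := by
        simp only [Set.mem_Ici]; linarith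
      have := Real.Gamma_strictMonoOn_Ici.monotoneOn h0 h1 (by linarith)
      rwa [Real.Gamma_nat_eq_factorial] at this
    -- s ^ m ≤ v ^ (n+1)  (real powers)
    have hsv : s ^ m ≤ v ^ (n + 1) := by
      have hvpow : v ^ ((n : ℝ) + 1) = v ^ (n + 1) := by
        rw [show ((n:ℝ) + 1) = ((n + 1 : ℕ) : ℝ) by push_cast; ring, Real.rpow_natCast]
      have step2 : v ^ (α * m) ≤ v ^ ((n : ℝ) + 1) :=
        Real.rpow_le_rpow_of_exponent_le hv1 (by linarith)
      rcases eq_or_lt_of_le hs with h0 | hspos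
      · have hm1 : 1 ≤ m := le_trans (by omega) (Nat.le_add_left N k)
        rw [← h0, zero_pow (by omega)]
        positivity
      · have : s ^ m = (s ^ α⁻¹) ^ (α * m) := by
          rw [← Real.rpow_natCast s m, ← Real.rpow_mul hs]
          congr 1
          field_simp
        rw [this, ← hvpow]
        refine le_trans ?_ step2
        exact Real.rpow_le_rpow (Real.rpow_nonneg hs _) (le_max_right _ _) hαm0
    -- v ^ n ≤ exp (2v) * (2^n)⁻¹ * n!
    have hvn : v ^ n ≤ Real.exp (2 * v) * ((2:ℝ) ^ n)⁻¹ * n ! := by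
      have h := Real.pow_div_factorial_le_exp (2 * v) (by positivity) n
      have h2n : (0:ℝ) < 2 ^ n := by positivity
      have hfac : (0:ℝ) < (n ! : ℝ) := by exact_mod_cast Nat.factorial_pos n
      rw [div_le_iff₀ hfac] at h
      rw [mul_pow] at h
      calc v ^ n = (2 ^ n * v ^ n) / 2 ^ n := by field_simp
      _ ≤ (Real.exp (2 * v) * n !) / 2 ^ n := by gcongr
      _ = Real.exp (2 * v) * ((2:ℝ) ^ n)⁻¹ * n ! := by ring
    -- (2^n)⁻¹ ≤ 2 * r ^ m
    have h2n : ((2:ℝ) ^ n)⁻¹ ≤ 2 * r ^ m := by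
      have hrm : r ^ m = (2:ℝ) ^ (-(α * m)) := by
        rw [hr, ← Real.rpow_natCast ((2:ℝ) ^ (-α)) m, ← Real.rpow_mul (by norm_num)]
        ring_nf
      have h1 : ((2:ℝ) ^ n)⁻¹ = (2:ℝ) ^ (-(n:ℝ)) := by
        rw [← Real.rpow_natCast 2 n, ← Real.rpow_neg (by norm_num)]
      rw [h1, hrm, show (2:ℝ) * (2:ℝ) ^ (-(α * m)) = (2:ℝ) ^ (1 - α * m) by
        rw [Real.rpow_sub two_pos, Real.rpow_one]; rw [Real.rpow_neg (by norm_num)]; ring]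
      exact Real.rpow_le_rpow_of_exponent_le one_le_two (by linarith)
    have hfac : (0:ℝ) < (n ! : ℝ) := by exact_mod_cast Nat.factorial_pos n
    have hm0 : (0:ℝ) ≤ (m:ℝ) + 1 := by positivity
    calc (((k + N : ℕ) : ℝ) + 1) * s ^ (k + N) / Real.Gamma (α * (k + N : ℕ) + 1)
        = ((m:ℝ) + 1) * s ^ m / Real.Gamma (α * m + 1) := by rw [hm]
      _ ≤ ((m:ℝ) + 1) * s ^ m / (n ! : ℝ) := by
          gcongr
      _ ≤ ((m:ℝ) + 1) * v ^ (n + 1) / (n ! : ℝ) := by gcongr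
      _ = ((m:ℝ) + 1) * (v * v ^ n) / (n ! : ℝ) := by rw [pow_succ]; ring_nf
      _ ≤ ((m:ℝ) + 1) * (v * (Real.exp (2 * v) * ((2:ℝ) ^ n)⁻¹ * n !)) / (n ! : ℝ) := by
          gcongr
      _ = ((m:ℝ) + 1) * (v * Real.exp (2 * v)) * ((2:ℝ) ^ n)⁻¹ := by field_simp
      _ ≤ ((m:ℝ) + 1) * (v * Real.exp (2 * v)) * (2 * r ^ m) := by
          gcongr
      _ = ((m:ℝ) + 1) * C * r ^ m := by rw [hC]; ring
      _ = (((k + N : ℕ) : ℝ) + 1) * C * r ^ (k + N) := by rw [hm]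

/-- The special function `𝓔_α(x) := (α/x) ∑_{k=1}^∞ (−1)^k k x^{αk}/Γ(αk+1)` (the `k = 0`
term of the series vanishes, so we may sum over all of `ℕ`). -/
noncomputable def calE (α x : ℝ) : ℝ :=
  (α / x) * ∑' k : ℕ, (-1 : ℝ) ^ k * k * x ^ (α * k) / Real.Gamma (α * k + 1)

/-- The (real restriction of the) Mittag-Leffler function `E_α(x) := ∑_{k=0}^∞ x^k/Γ(αk+1)`. -/
noncomputable def mittagLeffler (α x : ℝ) : ℝ :=
  ∑' k : ℕ, x ^ k / Real.Gamma (α * k + 1)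

theorem integral_calE (x₀ α lam : ℝ) (hx₀ : 0 < x₀) (hα : 0 < α) (hlam : 0 < lam) :
    ∫ x in (0 : ℝ)..x₀, calE α (lam ^ (1 / α) * x) =
      lam ^ (-(1 / α)) * (mittagLeffler α (-(lam * x₀ ^ α)) - 1) := by
  set c : ℝ := lam ^ (1 / α) with hcdef
  have hc0 : 0 < c := Real.rpow_pos_of_pos hlam _
  set s : ℝ := lam * x₀ ^ α with hsdef
  have hs0 : 0 < s := mul_pos hlam (Real.rpow_pos_of_pos hx₀ α)
  have hΓ : ∀ k : ℕ, 0 < Real.Gamma (α * k + 1) := fun k =>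
    Real.Gamma_pos_of_pos (by positivity)
  -- powers of c and x₀
  have hcpow : ∀ k : ℕ, c ^ (α * (k : ℝ)) = lam ^ k := fun k => by
    rw [hcdef, ← Real.rpow_natCast lam k, ← Real.rpow_mul hlam.le]
    congr 1
    field_simp
  have hx0pow : ∀ k : ℕ, x₀ ^ (α * (k : ℝ)) = (x₀ ^ α) ^ k := fun k => by
    rw [← Real.rpow_natCast (x₀ ^ α) k, ← Real.rpow_mul hx₀.le]
  have key : ∀ k : ℕ, c ^ (α * (k : ℝ) - 1) * x₀ ^ (α * (k : ℝ)) = s ^ k / c := fun k => by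
    rw [Real.rpow_sub hc0, Real.rpow_one, hcpow k, hx0pow k, hsdef, mul_pow]
    ring
  -- Step 1: rewrite the integrand as a series
  rw [intervalIntegral.integral_of_le hx₀.le]
  have hEq : Set.EqOn (fun x => calE α (c * x)) (fun x => ∑' k : ℕ, Fa α c k x)
      (Set.Ioc (0:ℝ) x₀) := by
    intro x hx
    have hx0 : 0 < x := hx.1
    simp only [calE, ← tsum_mul_left]
    refine tsum_congr fun k => ?_
    have e1 : (c * x) ^ (α * (k:ℝ)) = c ^ (α * (k:ℝ)) * x ^ (α * (k:ℝ)) :=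
      Real.mul_rpow hc0.le hx0.le
    have e2 : c ^ (α * (k:ℝ) - 1) = c ^ (α * (k:ℝ)) / c := by
      rw [Real.rpow_sub hc0, Real.rpow_one]
    have e3 : x ^ (α * (k:ℝ) - 1) = x ^ (α * (k:ℝ)) / x := by
      rw [Real.rpow_sub hx0, Real.rpow_one]
    simp only [Fa, e1, e2, e3]
    have hΓk := (hΓ k).ne'
    field_simp
  rw [MeasureTheory.setIntegral_congr_fun measurableSet_Ioc hEq]
  -- Step 2: interchange sum and integral
  have hInt : ∀ k : ℕ, Integrable (Fa α c k) (volume.restrict (Set.Ioc (0:ℝ) x₀)) :=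
    fun k => integrableOn_Fa hα hx₀ k
  have hSum : Summable fun k : ℕ => ∫ x in Set.Ioc (0:ℝ) x₀, ‖Fa α c k x‖ := by
    refine Summable.of_nonneg_of_le
      (fun k => integral_nonneg fun x => norm_nonneg _) (fun k => ?_)
      ((summable_aux hα hs0.le).mul_left c⁻¹)
    cases k with
    | zero =>
      rw [Fa_zero]
      simp only [norm_zero, integral_zero]
      positivity
    | succ k =>
      have hm : (0 : ℝ) < α * ((k : ℝ) + 1) := by positivity
      have hp : (-1 : ℝ) < α * ((k : ℝ) + 1) - 1 := by linarith
      have hΓm : 0 < Real.Gamma (α * ((k : ℝ) + 1) + 1) :=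
        Real.Gamma_pos_of_pos (by positivity)
      have h1 : ∫ x in Set.Ioc (0:ℝ) x₀, ‖Fa α c (k+1) x‖ =
          ∫ x in Set.Ioc (0:ℝ) x₀,
            (((k+1 : ℕ) : ℝ) * α * c ^ (α * ((k+1 : ℕ) : ℝ) - 1) /
              Real.Gamma (α * ((k+1 : ℕ) : ℝ) + 1)) * x ^ (α * ((k+1 : ℕ) : ℝ) - 1) :=
        MeasureTheory.setIntegral_congr_fun measurableSet_Ioc
          (fun x hx => norm_Fa hα hc0 (k+1) hx.1)
      rw [h1, MeasureTheory.integral_const_mul]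
      push_cast
      rw [integral_rpow_Ioc hx₀ hp, show α * ((k : ℝ) + 1) - 1 + 1 = α * ((k : ℝ) + 1) by ring]
      have hkey := key (k+1)
      push_cast at hkey
      calc ((k : ℝ) + 1) * α * c ^ (α * ((k:ℝ) + 1) - 1) / Real.Gamma (α * ((k:ℝ) + 1) + 1) *
            (x₀ ^ (α * ((k:ℝ) + 1)) / (α * ((k:ℝ) + 1)))
          = (c ^ (α * ((k:ℝ) + 1) - 1) * x₀ ^ (α * ((k:ℝ) + 1))) /
              Real.Gamma (α * ((k:ℝ) + 1) + 1) := by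
            field_simp
        _ = c⁻¹ * (s ^ (k+1) / Real.Gamma (α * ((k:ℝ) + 1) + 1)) := by
            rw [hkey]; field_simp
        _ ≤ c⁻¹ * ((((k:ℝ) + 1) + 1) * s ^ (k+1) / Real.Gamma (α * ((k:ℝ) + 1) + 1)) := by
            gcongr
            exact le_mul_of_one_le_left (by positivity) (by linarith [k.cast_nonneg (α := ℝ)])
  rw [← MeasureTheory.integral_tsum_of_summable_integral_norm hInt hSum]
  -- Step 3: compute the sum of the integrals
  have hJ : ∀ k : ℕ, (∫ x in Set.Ioc (0:ℝ) x₀, Fa α c k x) =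
      c⁻¹ * ((-s) ^ k / Real.Gamma (α * (k:ℝ) + 1)) - (if k = 0 then c⁻¹ else 0) := by
    intro k
    cases k with
    | zero =>
      rw [Fa_zero]
      simp [Real.Gamma_one]
    | succ k =>
      rw [integral_Fa_succ hα hx₀ k, if_neg (Nat.succ_ne_zero k)]
      have hkey := key (k+1)
      push_cast at hkey ⊢
      rw [show ((-1:ℝ)) ^ (k+1) * c ^ (α * ((k:ℝ) + 1) - 1) * x₀ ^ (α * ((k:ℝ) + 1)) =
          (-1:ℝ) ^ (k+1) * (c ^ (α * ((k:ℝ) + 1) - 1) * x₀ ^ (α * ((k:ℝ) + 1))) by ring, hkey,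
        neg_pow s (k+1)]
      field_simp
      ring
  rw [tsum_congr hJ]
  have hJ1 : Summable (fun k : ℕ => c⁻¹ * ((-s) ^ k / Real.Gamma (α * (k:ℝ) + 1))) := by
    refine Summable.mul_left _ ?_
    refine Summable.of_norm ?_
    refine Summable.of_nonneg_of_le (fun k => norm_nonneg _) (fun k => ?_) (summable_aux hα hs0.le)
    rw [Real.norm_eq_abs, abs_div, abs_pow, abs_neg, abs_of_pos hs0, abs_of_pos (hΓ k)]
    gcongr
    exact le_mul_of_one_le_left (by positivity) (by linarith [k.cast_nonneg (α := ℝ)])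
  have hJ2 : Summable (fun k : ℕ => if k = 0 then c⁻¹ else 0) :=
    (hasSum_ite_eq (0:ℕ) c⁻¹).summable
  rw [Summable.tsum_sub hJ1 hJ2, tsum_mul_left, (hasSum_ite_eq (0:ℕ) c⁻¹).tsum_eq]
  have hcinv : lam ^ (-(1 / α)) = c⁻¹ := by
    rw [Real.rpow_neg hlam.le, hcdef]
  rw [hcinv]
  simp only [mittagLeffler]
  ring
end

section
/- For every α ∈ (0,2), the small-argument asymptotic 𝓔_α(x) = −(α/Γ(1+α)) x^{α−1} + O(x^{2α−1}) holds as x → 0⁺; i.e., the function x ↦ x^{1−2α} (𝓔_α(x) + (α/Γ(1+α)) x^{α−1}) is bounded on some interval (0,ε) with ε > 0. -/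
open MeasureTheory Real Filter

lemma gamma_lower_bound : ∃ c : ℝ, 0 < c ∧ ∀ y : ℝ, 1 ≤ y → c ≤ Real.Gamma y := by
  have hcont : ContinuousOn Real.Gamma (Set.Icc (1:ℝ) 3) := by
    intro y hy
    refine (Real.differentiableAt_Gamma (fun n => ?_)).continuousAt.continuousWithinAt
    have h1 : (1:ℝ) ≤ y := hy.1
    have h2 : (0:ℝ) ≤ (n:ℝ) := Nat.cast_nonneg n
    intro h; rw [h] at h1; linarith
  obtain ⟨x₀, hx₀, hmin⟩ := (isCompact_Icc (a := (1:ℝ)) (b := 3)).exists_isMinOn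
    ⟨1, by norm_num, by norm_num⟩ hcont
  set m := Real.Gamma x₀ with hm
  have hmpos : 0 < m := Real.Gamma_pos_of_pos (by linarith [hx₀.1])
  refine ⟨min m 2, lt_min hmpos (by norm_num), fun y hy => ?_⟩
  by_cases h3 : y ≤ 3
  · exact le_trans (min_le_left _ _) (hmin ⟨hy, h3⟩)
  · have hΓ3 : Real.Gamma 3 = 2 := by
      rw [show (3:ℝ) = ((2:ℕ):ℝ) + 1 by norm_num, Real.Gamma_nat_eq_factorial]; norm_num
    have : Real.Gamma 3 ≤ Real.Gamma y :=
      Real.Gamma_strictMonoOn_Ici.monotoneOn (by norm_num) (by simp; linarith) (by linarith)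
    rw [hΓ3] at this
    exact le_trans (min_le_right _ _) this

theorem calE_asymptotic_small (α : ℝ) (hα : α ∈ Set.Ioo (0 : ℝ) 2) :
    ∃ ε > (0 : ℝ), ∃ C : ℝ, ∀ x ∈ Set.Ioo (0 : ℝ) ε,
      |x ^ (1 - 2 * α) * (calE α x + (α / Real.Gamma (1 + α)) * x ^ (α - 1))| ≤ C := by
  obtain ⟨hα0, hα2⟩ := hα
  obtain ⟨c, hc0, hc⟩ := gamma_lower_bound
  set ρ : ℝ := (1/2 : ℝ) ^ α with hρdef
  have hρ0 : 0 ≤ ρ := Real.rpow_nonneg (by norm_num) α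
  have hρ1 : ρ < 1 := Real.rpow_lt_one (by norm_num) (by norm_num) hα0
  have hSk : Summable (fun k : ℕ => (k:ℝ) * ρ ^ k) := by
    have := summable_pow_mul_geometric_of_norm_lt_one (R := ℝ) 1
      (by rwa [Real.norm_eq_abs, abs_of_nonneg hρ0])
    simpa using this
  have hS : Summable (fun k : ℕ => ((k:ℝ) + 2) * ρ ^ k) := by
    have h2 : Summable (fun k : ℕ => (2:ℝ) * ρ ^ k) :=
      (summable_geometric_of_lt_one hρ0 hρ1).mul_left 2
    simpa [add_mul] using hSk.add h2
  set S : ℝ := ∑' k : ℕ, ((k:ℝ) + 2) * ρ ^ k with hSdef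
  have hSnonneg : 0 ≤ S := tsum_nonneg (fun k => by positivity)
  refine ⟨1/2, by norm_num, α / c * S, ?_⟩
  intro x hx
  obtain ⟨hx0, hx12⟩ := hx
  set r : ℝ := x ^ α with hrdef
  have hr0 : 0 < r := Real.rpow_pos_of_pos hx0 α
  have hrρ : r ≤ ρ := le_of_lt (Real.rpow_lt_rpow hx0.le hx12 hα0)
  set f : ℕ → ℝ := fun k => (-1 : ℝ) ^ k * k * x ^ (α * k) / Real.Gamma (α * k + 1) with hfdef
  have hxak : ∀ k : ℕ, x ^ (α * (k:ℝ)) = r ^ k := fun k => by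
    rw [hrdef, ← Real.rpow_natCast (x ^ α) k, ← Real.rpow_mul hx0.le]
  have hΓge : ∀ k : ℕ, c ≤ Real.Gamma (α * k + 1) := fun k => by
    refine hc _ ?_
    have : (0:ℝ) ≤ α * k := by positivity
    linarith
  have hΓpos : ∀ k : ℕ, 0 < Real.Gamma (α * k + 1) := fun k =>
    lt_of_lt_of_le hc0 (hΓge k)
  have habs : ∀ k : ℕ, |f k| = (k:ℝ) * r ^ k / Real.Gamma (α * k + 1) := by
    intro k
    rw [hfdef]
    simp only [abs_div, abs_mul, abs_pow, abs_neg, abs_one, one_pow, one_mul,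
      Nat.abs_cast, abs_of_pos (hΓpos k), abs_of_pos (Real.rpow_pos_of_pos hx0 _), hxak, abs_of_pos hr0]
  have hbound : ∀ k : ℕ, |f k| ≤ (1/c) * ((k:ℝ) * ρ ^ k) := by
    intro k
    rw [habs k, one_div, inv_mul_eq_div]
    gcongr <;> first
      | exact hΓge k
      | exact pow_le_pow_left₀ hr0.le hrρ k
  have hfs : Summable f := by
    apply Summable.of_norm
    refine Summable.of_nonneg_of_le (fun k => norm_nonneg _) (fun k => ?_) (hSk.mul_left (1/c))
    rw [Real.norm_eq_abs]; exact hbound k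
  have hf1 : Summable (fun k => f (k + 1)) := (summable_nat_add_iff 1).mpr hfs
  set T : ℝ := ∑' k : ℕ, f (k + 2) with hTdef
  have hf0 : f 0 = 0 := by simp [hfdef]
  have hsplit : ∑' k, f k = f 1 + T := by
    rw [Summable.tsum_eq_zero_add hfs, Summable.tsum_eq_zero_add hf1, hf0, hTdef]
    norm_num
  have hE : calE α x + (α / Real.Gamma (1 + α)) * x ^ (α - 1) = (α / x) * T := by
    have hfone : f 1 = -(x ^ α) / Real.Gamma (α + 1) := by
      simp [hfdef]
    have h1 : x ^ (α - 1) = x ^ α / x := Real.rpow_sub_one hx0.ne' α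
    have hΓp : Real.Gamma (α + 1) ≠ 0 :=
      (Real.Gamma_pos_of_pos (by linarith : (0:ℝ) < α + 1)).ne'
    unfold calE
    rw [← hfdef, hsplit, hfone, h1, add_comm (1:ℝ) α]
    field_simp
    ring
  have hnormb : ∀ k : ℕ, ‖f (k + 2)‖ ≤ r ^ 2 / c * (((k:ℝ) + 2) * ρ ^ k) := by
    intro k
    rw [Real.norm_eq_abs, habs]
    have h1 : ((k:ℝ) + 2) * r ^ (k + 2) ≤ r ^ 2 * (((k:ℝ) + 2) * ρ ^ k) := by
      calc ((k:ℝ) + 2) * r ^ (k + 2) = r ^ 2 * (((k:ℝ) + 2) * r ^ k) := by ring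
        _ ≤ r ^ 2 * (((k:ℝ) + 2) * ρ ^ k) := by
            gcongr
    calc (↑(k + 2) : ℝ) * r ^ (k + 2) / Real.Gamma (α * ↑(k + 2) + 1)
        ≤ ((k:ℝ) + 2) * r ^ (k + 2) / c := by
          have hg := hΓge (k + 2)
          push_cast at hg ⊢
          gcongr
      _ ≤ r ^ 2 * (((k:ℝ) + 2) * ρ ^ k) / c := by
          gcongr
      _ = r ^ 2 / c * (((k:ℝ) + 2) * ρ ^ k) := by ring
  have hnsum : Summable (fun k : ℕ => ‖f (k + 2)‖) :=
    Summable.of_nonneg_of_le (fun k => norm_nonneg _) hnormb (hS.mul_left _)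
  have hTbound : |T| ≤ r ^ 2 / c * S := by
    calc |T| ≤ ∑' k : ℕ, ‖f (k + 2)‖ := by
          rw [hTdef, ← Real.norm_eq_abs]
          exact norm_tsum_le_tsum_norm hnsum
      _ ≤ ∑' k : ℕ, r ^ 2 / c * (((k:ℝ) + 2) * ρ ^ k) :=
          Summable.tsum_le_tsum hnormb hnsum (hS.mul_left _)
      _ = r ^ 2 / c * S := by rw [tsum_mul_left]
  have hkey : x ^ (1 - 2 * α) * r ^ 2 = x := by
    rw [hrdef, ← Real.rpow_natCast (x ^ α) 2, ← Real.rpow_mul hx0.le, ← Real.rpow_add hx0]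
    push_cast
    rw [show 1 - 2 * α + α * 2 = 1 by ring, Real.rpow_one]
  rw [hE]
  calc |x ^ (1 - 2 * α) * ((α / x) * T)| = x ^ (1 - 2 * α) * (α / x) * |T| := by
        rw [abs_mul, abs_mul, abs_of_pos (Real.rpow_pos_of_pos hx0 _),
          abs_of_pos (div_pos hα0 hx0)]
        ring
    _ ≤ x ^ (1 - 2 * α) * (α / x) * (r ^ 2 / c * S) := by
        have h0 : 0 ≤ x ^ (1 - 2 * α) * (α / x) := by positivity
        exact mul_le_mul_of_nonneg_left hTbound h0
    _ = (x ^ (1 - 2 * α) * r ^ 2) * (α / x / c * S) := by ring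
    _ = α / c * S := by
        rw [hkey]
        field_simp
end

section
/- Let α ∈ (0,2), μ > 0, η > 0, ν > 0, σ > 0, ω > 0, a > 0, and P₀, P_Δ, d⁰, l ∈ ℝ. Set β := μ + ν/(η+σ) and P(t) := P₀ − P_Δ + P_Δ cos(ωt). Define for t ≥ 0: d(t) := d⁰[1 + (ν/(μ(η+σ)+ν))(E_α(−β t^α) − 1)] − (l/(2a(η+σ)))(P(t) − P(0)) − (ν l/(2a(η+σ)²)) β^{1/α−1} ∫₀^t 𝓔_α(β^{1/α}(t−τ)) [P(τ) − P(0)] dτ. Then for all t ≥ 0: d(t) = d⁰ + (P_Δ l/(2a(η+σ)))(1 − cos(ωt)) + (ν/(μ(η+σ)+ν))(d⁰ + P_Δ l/(2a(η+σ)))(E_α(−β t^α) − 1) − (ν l P_Δ/(2a(η+σ)²)) β^{1/α−1} ∫₀^t 𝓔_α(β^{1/α} τ) cos(ω(t−τ)) dτ. -/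
open MeasureTheory Real Filter

open Set in
lemma gamma_lb {T s : ℝ} (hT : 1 ≤ T) (hs : 1 ≤ s) :
    Real.exp (-(2*T)) * T ^ s ≤ Real.Gamma s := by
  have hT0 : (0:ℝ) < T := lt_of_lt_of_le one_pos hT
  have hs0 : (0:ℝ) < s := lt_of_lt_of_le one_pos hs
  rw [Real.Gamma_eq_integral hs0]
  have hint := Real.GammaIntegral_convergent hs0
  have hsub : Set.Ioc T (2*T) ⊆ Set.Ioi (0:ℝ) := fun x hx => lt_trans hT0 hx.1
  have h1 : ∫ x in Set.Ioc T (2*T), Real.exp (-x) * x ^ (s-1) ≤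
      ∫ x in Set.Ioi (0:ℝ), Real.exp (-x) * x ^ (s-1) := by
    apply setIntegral_mono_set hint
    · filter_upwards [ae_restrict_mem measurableSet_Ioi] with x hx
      have hx' : (0:ℝ) < x := hx
      positivity
    · exact HasSubset.Subset.eventuallyLE hsub
  refine le_trans ?_ h1
  have h2 : Real.exp (-(2*T)) * T ^ (s-1) * (volume (Set.Ioc T (2*T))).toReal ≤
      ∫ x in Set.Ioc T (2*T), Real.exp (-x) * x ^ (s-1) := by
    apply setIntegral_ge_of_const_le_real measurableSet_Ioc (by simp)
    · intro x hx
      have hx1 : T ≤ x := le_of_lt hx.1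
      have : Real.exp (-(2*T)) ≤ Real.exp (-x) := by
        apply Real.exp_le_exp.2; linarith [hx.2]
      exact mul_le_mul this (Real.rpow_le_rpow hT0.le hx1 (by linarith)) (by positivity)
        (Real.exp_pos _).le
    · exact hint.mono_set hsub
  calc Real.exp (-(2*T)) * T ^ s
      = Real.exp (-(2*T)) * T ^ (s-1) * (volume (Set.Ioc T (2*T))).toReal := by
        rw [Real.volume_Ioc]
        rw [show 2*T - T = T by ring, ENNReal.toReal_ofReal hT0.le,
          mul_assoc, ← Real.rpow_add_one hT0.ne' (s-1)]
        ring_nf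
    _ ≤ _ := h2

open Set in
lemma summable_core {α : ℝ} (hα : 0 < α) {q : ℝ} (hq : 0 ≤ q) :
    Summable (fun k : ℕ => ((k:ℝ)+1) * q ^ k / Real.Gamma (α*k+1)) := by
  set T := max 1 ((2*q) ^ (1/α)) with hTdef
  have hT1 : 1 ≤ T := le_max_left _ _
  have hT0 : (0:ℝ) < T := lt_of_lt_of_le one_pos hT1
  have hTα : (0:ℝ) < T ^ α := Real.rpow_pos_of_pos hT0 α
  have hTαq : 2*q ≤ T ^ α := by
    have h1 : 2*q = ((2*q) ^ (1/α)) ^ α := by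
      rw [← Real.rpow_mul (by linarith), one_div_mul_cancel hα.ne', Real.rpow_one]
    rw [h1]
    exact Real.rpow_le_rpow (Real.rpow_nonneg (by linarith) _) (le_max_right _ _) hα.le
  have hsum : Summable (fun k : ℕ => Real.exp (2*T) * (((k:ℝ)+1) * (1/2:ℝ)^k)) := by
    apply Summable.mul_left
    have h2 : Summable (fun k : ℕ => (k:ℝ)^1 * (1/2:ℝ)^k + (1/2:ℝ)^k) := by
      apply Summable.add
      · apply summable_pow_mul_geometric_of_norm_lt_one
        rw [norm_of_nonneg (by norm_num)]; norm_num
      · exact summable_geometric_of_lt_one (by norm_num) (by norm_num)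
    have he : (fun k : ℕ => ((k:ℝ)+1) * (1/2:ℝ)^k)
        = (fun k : ℕ => (k:ℝ)^1 * (1/2:ℝ)^k + (1/2:ℝ)^k) := by
      funext k; ring
    rw [he]; exact h2
  apply Summable.of_nonneg_of_le (fun k => ?_) (fun k => ?_) hsum
  · have := Real.Gamma_pos_of_pos (show (0:ℝ) < α*k+1 by positivity)
    positivity
  · have hΓ : Real.exp (-(2*T)) * (T^α)^k ≤ Real.Gamma (α*k+1) := by
      have h1 := gamma_lb hT1 (show (1:ℝ) ≤ α*k+1 by
        have := mul_nonneg hα.le (Nat.cast_nonneg (α:=ℝ) k); linarith)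
      refine le_trans ?_ h1
      apply mul_le_mul_of_nonneg_left _ (Real.exp_pos _).le
      rw [← Real.rpow_natCast (T^α) k, ← Real.rpow_mul hT0.le]
      exact Real.rpow_le_rpow_of_exponent_le hT1 (by nlinarith [Nat.cast_nonneg (α := ℝ) k])
    have hqk : q^k ≤ (T^α/2)^k := pow_le_pow_left₀ hq (by linarith) k
    have hΓ0 : 0 < Real.Gamma (α*k+1) :=
      Real.Gamma_pos_of_pos (by positivity)
    have hk0 : (0:ℝ) ≤ (k:ℝ)+1 := by positivity
    calc ((k:ℝ)+1) * q^k / Real.Gamma (α*k+1)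
        ≤ ((k:ℝ)+1) * (T^α/2)^k / (Real.exp (-(2*T)) * (T^α)^k) := by
          apply div_le_div₀ (by positivity) (mul_le_mul_of_nonneg_left hqk hk0) (by positivity) hΓ
      _ = Real.exp (2*T) * (((k:ℝ)+1) * (1/2:ℝ)^k) := by
          rw [Real.exp_neg, div_pow, div_pow]
          field_simp
          ring

open Set in
lemma calE_key {α lam t : ℝ} (hα : 0 < α) (hlam : 0 < lam) (ht : 0 < t) :
    IntegrableOn (fun s => calE α (lam * s)) (Set.Ioc 0 t) volume ∧
    ∫ s in Set.Ioc 0 t, calE α (lam * s) =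
      (mittagLeffler α (-(lam ^ α * t ^ α)) - 1) / lam := by
  have htα : (0:ℝ) < t ^ α := Real.rpow_pos_of_pos ht α
  set q : ℝ := lam ^ α * t ^ α with hqdef
  have hq0 : 0 < q := mul_pos (Real.rpow_pos_of_pos hlam α) htα
  have hΓpos : ∀ k : ℕ, 0 < Real.Gamma (α * k + 1) := fun k =>
    Real.Gamma_pos_of_pos (by positivity)
  set C : ℕ → ℝ := fun k =>
    α * (-1)^k * (k:ℝ) * lam ^ (α*(k:ℝ)-1) / Real.Gamma (α*k+1) with hCdef
  set g : ℕ → ℝ → ℝ := fun k s => C k * s ^ (α*(k:ℝ)-1) with hgdef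
  have hlamk : ∀ k : ℕ, lam ^ (α*(k:ℝ)) = (lam ^ α)^k := fun k => by
    rw [Real.rpow_mul hlam.le, Real.rpow_natCast]
  have htk : ∀ k : ℕ, t ^ (α*(k:ℝ)) = (t ^ α)^k := fun k => by
    rw [Real.rpow_mul ht.le, Real.rpow_natCast]
  have hCabs : ∀ k : ℕ, |C k| = α * (k:ℝ) * lam ^ (α*(k:ℝ)-1) / Real.Gamma (α*k+1) := by
    intro k
    rw [hCdef, abs_div, abs_of_pos (hΓpos k)]
    congr 1
    rw [abs_mul, abs_mul, abs_mul, abs_pow, abs_neg, abs_one, one_pow, mul_one,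
      abs_of_pos hα, Nat.abs_cast, abs_of_pos (Real.rpow_pos_of_pos hlam _)]
  set m : ℕ → ℝ := fun k => α * (k:ℝ) * lam ^ (α*(k:ℝ)-1) * t ^ (α*((k:ℝ)-1)) /
    Real.Gamma (α*k+1) with hmdef
  have hm_eq : ∀ k : ℕ, m k = (α/(lam * t^α)) * ((k:ℝ) * q^k / Real.Gamma (α*k+1)) := by
    intro k
    have h1 : lam ^ (α*(k:ℝ)-1) = (lam^α)^k / lam := by
      rw [Real.rpow_sub hlam, Real.rpow_one, hlamk]
    have h2 : t ^ (α*((k:ℝ)-1)) = (t^α)^k / t^α := by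
      rw [show α*((k:ℝ)-1) = α*(k:ℝ) - α by ring, Real.rpow_sub ht, htk]
    simp only [hmdef]
    rw [h1, h2, hqdef]
    field_simp
    ring
  have hm_nonneg : ∀ k : ℕ, 0 ≤ m k := by
    intro k
    rw [hm_eq k]
    positivity
  have hm_sum : Summable m := by
    apply Summable.of_nonneg_of_le hm_nonneg (fun k => ?_)
      ((summable_core hα hq0.le).mul_left (α/(lam*t^α)))
    rw [hm_eq k]
    apply mul_le_mul_of_nonneg_left ?_ (by positivity)
    gcongr
    linarith
  -- norm bound for g on Ioc 0 t
  have hg_norm : ∀ k : ℕ, ∀ s ∈ Set.Ioc (0:ℝ) t, ‖g k s‖ ≤ m k * s ^ (α-1) := by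
    intro k s hs
    have hs0 : 0 < s := hs.1
    rcases Nat.eq_zero_or_pos k with hk | hk
    · subst hk
      simp only [hgdef, hCdef]
      norm_num
      exact mul_nonneg (hm_nonneg 0) (Real.rpow_nonneg hs0.le _)
    · have h1 : s ^ (α*(k:ℝ)-1) = s ^ (α-1) * s ^ (α*((k:ℝ)-1)) := by
        rw [← Real.rpow_add hs0]; congr 1; ring
      have h2 : s ^ (α*((k:ℝ)-1)) ≤ t ^ (α*((k:ℝ)-1)) := by
        apply Real.rpow_le_rpow hs0.le hs.2
        have : (1:ℝ) ≤ (k:ℝ) := by exact_mod_cast hk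
        nlinarith
      simp only [hgdef]
      rw [norm_mul, Real.norm_eq_abs, Real.norm_eq_abs, hCabs k,
        abs_of_pos (Real.rpow_pos_of_pos hs0 _), h1]
      have hnn : (0:ℝ) ≤ α * (k:ℝ) * lam ^ (α*(k:ℝ)-1) / Real.Gamma (α*k+1) := by
        have := hΓpos k; positivity
      calc α * (k:ℝ) * lam ^ (α*(k:ℝ)-1) / Real.Gamma (α*k+1) * (s ^ (α-1) * s ^ (α*((k:ℝ)-1)))
          ≤ α * (k:ℝ) * lam ^ (α*(k:ℝ)-1) / Real.Gamma (α*k+1) * (s ^ (α-1) * t ^ (α*((k:ℝ)-1))) := by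
            apply mul_le_mul_of_nonneg_left _ hnn
            exact mul_le_mul_of_nonneg_left h2 (Real.rpow_nonneg hs0.le _)
        _ = m k * s ^ (α-1) := by simp only [hmdef]; ring
  -- summability of g at each point
  have hg_summable_norm : ∀ s ∈ Set.Ioc (0:ℝ) t, Summable (fun k => ‖g k s‖) := by
    intro s hs
    apply Summable.of_nonneg_of_le (fun k => norm_nonneg _) (fun k => hg_norm k s hs)
      (hm_sum.mul_right _)
  -- pointwise identity
  have hg_eq : ∀ s ∈ Set.Ioc (0:ℝ) t, calE α (lam * s) = ∑' k, g k s := by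
    intro s hs
    have hs0 : 0 < s := hs.1
    rw [calE, ← tsum_mul_left]
    apply tsum_congr
    intro k
    have hls : lam * s ≠ 0 := by positivity
    have h1 : (lam*s) ^ (α*(k:ℝ)) = (lam ^ (α*(k:ℝ)-1) * lam) * (s ^ (α*(k:ℝ)-1) * s) := by
      conv_lhs => rw [Real.mul_rpow hlam.le hs0.le,
        show α*(k:ℝ) = (α*(k:ℝ)-1)+1 by ring,
        Real.rpow_add_one hlam.ne', Real.rpow_add_one hs0.ne']
    simp only [hgdef, hCdef]
    rw [h1]
    have hΓ := (hΓpos k).ne'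
    field_simp
  -- integrability of each g k
  have hgint : ∀ k : ℕ, IntegrableOn (g k) (Set.Ioc 0 t) volume := by
    intro k
    rcases Nat.eq_zero_or_pos k with hk | hk
    · subst hk
      have : g 0 = fun _ => (0:ℝ) := by
        funext s; simp only [hgdef, hCdef]; norm_num
      rw [this]; exact integrable_zero _ _ _
    · have hk1 : (1:ℝ) ≤ (k:ℝ) := by exact_mod_cast hk
      have hexp : (-1:ℝ) < α*(k:ℝ)-1 := by nlinarith
      exact ((intervalIntegral.intervalIntegrable_rpow' hexp (a := 0) (b := t)).1).const_mul _
  -- value of each ∫ g k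
  have hgval : ∀ k : ℕ, ∫ s in Set.Ioc 0 t, g k s =
      ((-q)^k / Real.Gamma (α*k+1) - (if k = 0 then 1 else 0)) / lam := by
    intro k
    rcases Nat.eq_zero_or_pos k with hk | hk
    · subst hk
      have : g 0 = fun _ => (0:ℝ) := by
        funext s; simp only [hgdef, hCdef]; norm_num
      rw [this]
      norm_num [Real.Gamma_one]
    · have hk1 : (1:ℝ) ≤ (k:ℝ) := by exact_mod_cast hk
      have hexp : (-1:ℝ) < α*(k:ℝ)-1 := by nlinarith
      have hαk : (0:ℝ) < α*(k:ℝ) := by nlinarith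
      have : ∫ s in Set.Ioc 0 t, g k s = C k * ∫ s in (0:ℝ)..t, s ^ (α*(k:ℝ)-1) := by
        rw [intervalIntegral.integral_of_le ht.le, ← integral_const_mul]
      rw [this, integral_rpow (Or.inl hexp)]
      rw [Real.zero_rpow (by linarith), sub_zero, sub_add_cancel, htk]
      have h1 : lam ^ (α*(k:ℝ)-1) = (lam^α)^k / lam := by
        rw [Real.rpow_sub hlam, Real.rpow_one, hlamk]
      have hq : (-q)^k = (-1)^k * ((lam^α)^k * (t^α)^k) := by
        rw [hqdef, neg_pow, mul_pow]
      simp only [hCdef, if_neg (Nat.pos_iff_ne_zero.mp hk), sub_zero]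
      rw [h1, hq]
      have hΓ := (hΓpos k).ne'
      field_simp
  -- summability of the integrals of norms
  have hgnormval : Summable (fun k => ∫ s in Set.Ioc 0 t, ‖g k s‖) := by
    apply Summable.of_nonneg_of_le
      (fun k => integral_nonneg (fun s => norm_nonneg _))
      (fun k => ?_)
      (((summable_core hα hq0.le).mul_left (1/lam)))
    have hb : ∀ s ∈ Set.Ioc (0:ℝ) t, ‖g k s‖ ≤ m k * s ^ (α-1) := hg_norm k
    calc ∫ s in Set.Ioc 0 t, ‖g k s‖
        ≤ ∫ s in Set.Ioc 0 t, m k * s ^ (α-1) := by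
          apply setIntegral_mono_on (hgint k).norm
            ((((intervalIntegral.intervalIntegrable_rpow' (by linarith : (-1:ℝ) < α-1)
              (a := 0) (b := t)).1)).const_mul _) measurableSet_Ioc hb
      _ = m k * ∫ s in (0:ℝ)..t, s ^ (α-1) := by
          rw [intervalIntegral.integral_of_le ht.le, ← integral_const_mul]
      _ ≤ 1/lam * (((k:ℝ)+1) * q^k / Real.Gamma (α*k+1)) := by
          have hint1 : ∫ s in (0:ℝ)..t, s ^ (α-1) = t^α/α := by
            rw [integral_rpow (Or.inl (by linarith : (-1:ℝ) < α-1)),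
              Real.zero_rpow (by linarith : α-1+1 ≠ 0), sub_zero, sub_add_cancel]
          rw [hint1, hm_eq k]
          have hΓ := (hΓpos k).ne'
          have e : α/(lam*t^α) * ((k:ℝ) * q^k / Real.Gamma (α*(k:ℝ)+1)) * (t^α/α)
              = 1/lam * ((k:ℝ) * q^k / Real.Gamma (α*(k:ℝ)+1)) := by
            field_simp
          rw [e]
          gcongr
          linarith
  -- overall integrability
  have hmeas : AEStronglyMeasurable (fun s => calE α (lam * s))
      (volume.restrict (Set.Ioc 0 t)) := by
    have hae : ∀ᵐ s ∂(volume.restrict (Set.Ioc 0 t)),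
        Filter.Tendsto (fun n => ∑ k ∈ Finset.range n, g k s) Filter.atTop
          (nhds (calE α (lam*s))) := by
      filter_upwards [ae_restrict_mem measurableSet_Ioc] with s hs
      rw [hg_eq s hs]
      exact ((hg_summable_norm s hs).of_norm).hasSum.tendsto_sum_nat
    exact (aemeasurable_of_tendsto_metrizable_ae'
      (fun n => Finset.aemeasurable_fun_sum _ (fun k _ => (hgint k).aemeasurable)) hae).aestronglyMeasurable
  have hint : IntegrableOn (fun s => calE α (lam * s)) (Set.Ioc 0 t) volume := by
    apply Integrable.mono'
      (((intervalIntegral.intervalIntegrable_rpow' (by linarith : (-1:ℝ) < α-1)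
        (a := 0) (b := t)).1).const_mul (∑' k, m k)) hmeas
    filter_upwards [ae_restrict_mem measurableSet_Ioc] with s hs
    rw [Real.norm_eq_abs, hg_eq s hs]
    calc |∑' k, g k s| ≤ ∑' k, ‖g k s‖ := norm_tsum_le_tsum_norm (hg_summable_norm s hs)
      _ ≤ ∑' k, m k * s^(α-1) := Summable.tsum_le_tsum (fun k => hg_norm k s hs)
          (hg_summable_norm s hs) (hm_sum.mul_right _)
      _ = (∑' k, m k) * s^(α-1) := tsum_mul_right
  refine ⟨hint, ?_⟩
  have h1 : ∫ s in Set.Ioc 0 t, calE α (lam*s) = ∫ s in Set.Ioc 0 t, ∑' k, g k s :=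
    setIntegral_congr_fun measurableSet_Ioc (fun s hs => hg_eq s hs)
  rw [h1, ← integral_tsum_of_summable_integral_norm hgint hgnormval]
  have hFsum : Summable (fun k : ℕ => (-q)^k / Real.Gamma (α*(k:ℝ)+1)) := by
    apply Summable.of_norm_bounded (summable_core hα hq0.le)
    intro k
    rw [norm_div, norm_pow, norm_neg, Real.norm_eq_abs, Real.norm_eq_abs,
      abs_of_pos hq0, abs_of_pos (hΓpos k)]
    gcongr
    nlinarith [pow_nonneg hq0.le k, Nat.cast_nonneg (α := ℝ) k, pow_pos hq0 k]
  have hesum : Summable (fun k : ℕ => if k = 0 then (1:ℝ) else 0) :=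
    (hasSum_ite_eq 0 (1:ℝ)).summable
  calc ∑' k, ∫ s in Set.Ioc 0 t, g k s
      = ∑' k : ℕ, ((-q)^k / Real.Gamma (α*(k:ℝ)+1) - (if k = 0 then (1:ℝ) else 0)) / lam := by
        exact tsum_congr hgval
    _ = ((∑' k : ℕ, (-q)^k / Real.Gamma (α*(k:ℝ)+1)) - 1) / lam := by
        rw [tsum_div_const, Summable.tsum_sub hFsum hesum, (hasSum_ite_eq 0 (1:ℝ)).tsum_eq]
    _ = (mittagLeffler α (-(lam ^ α * t ^ α)) - 1) / lam := by
        rw [mittagLeffler, hqdef]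

theorem coefficient_rewriting (α μ η ν σ ω a P₀ PΔ d₀ l : ℝ)
    (hα : α ∈ Set.Ioo (0 : ℝ) 2) (hμ : 0 < μ) (hη : 0 < η) (hν : 0 < ν)
    (hσ : 0 < σ) (hω : 0 < ω) (ha : 0 < a)
    (β : ℝ) (hβ : β = μ + ν / (η + σ))
    (P : ℝ → ℝ) (hP : ∀ s, P s = P₀ - PΔ + PΔ * Real.cos (ω * s))
    (d : ℝ → ℝ)
    (hd : ∀ t, 0 ≤ t → d t =
      d₀ * (1 + ν / (μ * (η + σ) + ν) * (mittagLeffler α (-(β * t ^ α)) - 1))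
        - l / (2 * a * (η + σ)) * (P t - P 0)
        - ν * l / (2 * a * (η + σ) ^ 2) * β ^ (1 / α - 1) *
            ∫ τ in (0 : ℝ)..t, calE α (β ^ (1 / α) * (t - τ)) * (P τ - P 0)) :
    ∀ t, 0 ≤ t → d t =
      d₀ + PΔ * l / (2 * a * (η + σ)) * (1 - Real.cos (ω * t))
        + ν / (μ * (η + σ) + ν) * (d₀ + PΔ * l / (2 * a * (η + σ))) *
            (mittagLeffler α (-(β * t ^ α)) - 1)
        - ν * l * PΔ / (2 * a * (η + σ) ^ 2) * β ^ (1 / α - 1) *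
            ∫ τ in (0 : ℝ)..t, calE α (β ^ (1 / α) * τ) * Real.cos (ω * (t - τ)) := by
  obtain ⟨hα0, hα2⟩ := hα
  intro t ht
  have hX : (0:ℝ) < η + σ := by linarith
  have hβ0 : 0 < β := by rw [hβ]; positivity
  have hM : (0:ℝ) < μ * (η + σ) + ν := by positivity
  have hlam : 0 < β ^ (1/α) := Real.rpow_pos_of_pos hβ0 _
  have hlamα : (β ^ (1/α)) ^ α = β := by
    rw [← Real.rpow_mul hβ0.le, one_div_mul_cancel hα0.ne', Real.rpow_one]
  have hPt : ∀ s, P s - P 0 = PΔ * (Real.cos (ω*s) - 1) := by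
    intro s
    rw [hP s, hP 0, mul_zero, Real.cos_zero]
    ring
  rcases ht.eq_or_lt with h | ht0
  · -- t = 0
    subst h
    rw [hd 0 le_rfl]
    have hE : mittagLeffler α (-(β * (0:ℝ) ^ α)) = 1 := by
      rw [Real.zero_rpow hα0.ne', mul_zero, neg_zero, mittagLeffler]
      rw [tsum_eq_single 0 (fun k hk => by rw [zero_pow hk, zero_div])]
      norm_num [Real.Gamma_one]
    rw [hE]
    simp [Real.cos_zero]
  · obtain ⟨hint, hval⟩ := calE_key hα0 hlam ht0
    have hII : IntervalIntegrable (fun s => calE α (β^(1/α) * s)) volume 0 t := by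
      refine ⟨hint, ?_⟩
      rw [Set.Ioc_eq_empty (by linarith)]
      exact integrableOn_empty
    have hIIcos : IntervalIntegrable
        (fun τ => calE α (β^(1/α) * τ) * Real.cos (ω*(t-τ))) volume 0 t :=
      hII.mul_continuousOn (Real.continuous_cos.comp (continuous_const.mul (continuous_const.sub continuous_id))).continuousOn
    have hsub : (∫ τ in (0:ℝ)..t, calE α (β^(1/α) * (t-τ)) * (P τ - P 0))
        = PΔ * ((∫ τ in (0:ℝ)..t, calE α (β^(1/α)*τ) * Real.cos (ω*(t-τ)))
            - ∫ τ in (0:ℝ)..t, calE α (β^(1/α)*τ)) := by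
      have e1 : (∫ τ in (0:ℝ)..t, calE α (β^(1/α) * (t-τ)) * (P τ - P 0))
          = ∫ τ in (0:ℝ)..t, PΔ * ((fun s => calE α (β^(1/α)*s) * Real.cos (ω*(t-s))
              - calE α (β^(1/α)*s)) (t - τ)) := by
        apply intervalIntegral.integral_congr
        intro τ _
        simp only
        rw [show t - (t - τ) = τ by ring, hPt τ]
        ring
      rw [e1, intervalIntegral.integral_const_mul,
        intervalIntegral.integral_comp_sub_left
          (fun s => calE α (β^(1/α)*s) * Real.cos (ω*(t-s)) - calE α (β^(1/α)*s)) t,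
        sub_self, sub_zero, intervalIntegral.integral_sub hIIcos hII]
    have hI1 : ∫ τ in (0:ℝ)..t, calE α (β^(1/α)*τ)
        = (mittagLeffler α (-(β * t^α)) - 1) / β^(1/α) := by
      rw [intervalIntegral.integral_of_le ht0.le, hval, hlamα]
    have hBlam : β^(1/α-1) = β^(1/α) / β := by
      rw [Real.rpow_sub hβ0, Real.rpow_one]
    rw [hd t ht, hsub, hI1, hPt t, hBlam]
    set lam := β^(1/α) with hlamdef
    set E := mittagLeffler α (-(β*t^α)) with hEdef
    set I := ∫ τ in (0:ℝ)..t, calE α (lam*τ) * Real.cos (ω*(t-τ)) with hIdef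
    have hβX : β * (η+σ) = μ*(η+σ)+ν := by rw [hβ]; field_simp
    have h1 : β = (μ*(η+σ)+ν)/(η+σ) := by
      rw [← hβX]; field_simp
    rw [h1]
    field_simp
    ring
end

section
/- Let μ ≥ 0, η > 0, ν > 0, ω > 0, a > 0, P_Δ ∈ ℝ. Let (σ_k)_{k≥1} be a nonincreasing sequence of positive reals, and let (d⁰_k)_{k≥1}, (l_k)_{k≥1} be square-summable real sequences. Set β_k := μ + ν/(η+σ_k) and define for t ≥ 0: r_k(t) := (ν/(μ(η+σ_k)+ν))(d⁰_k + P_Δ l_k/(2a(η+σ_k))) e^{−β_k t} + (l_k P_Δ ν/(2a(η+σ_k)²)) ∫_t^∞ e^{−β_k τ} cos(ω(t−τ)) dτ. Then there exist constants C > 0 and T > 0 such that for all t ≥ T, (∑_{k=1}^∞ |r_k(t)|²)^{1/2} ≤ C e^{−β₁ t}, where β₁ = μ + ν/(η+σ₁). -/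
open MeasureTheory Real Filter

set_option maxHeartbeats 800000

lemma my_integral_exp_neg_mul_Ioi {b : ℝ} (hb : 0 < b) (t : ℝ) :
    ∫ x in Set.Ioi t, Real.exp (-(b * x)) = Real.exp (-(b * t)) / b := by
  have hderiv : ∀ x ∈ Set.Ici t, HasDerivAt (fun y => -(Real.exp (-(b * y)) / b))
      (Real.exp (-(b * x))) x := by
    intro x _
    have h1 : HasDerivAt (fun y : ℝ => -(b * y)) (-b) x := by
      simpa using ((hasDerivAt_id x).const_mul b).fun_neg
    have h2 : HasDerivAt (fun y : ℝ => Real.exp (-(b * y)))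
        (Real.exp (-(b * x)) * (-b)) x := (Real.hasDerivAt_exp _).comp x h1
    have h3 := (h2.div_const b).neg
    have he : -(Real.exp (-(b * x)) * (-b) / b) = Real.exp (-(b * x)) := by
      field_simp
    rwa [he] at h3
  have hint : IntegrableOn (fun x => Real.exp (-(b * x))) (Set.Ioi t) := by
    have := exp_neg_integrableOn_Ioi t hb
    simpa [neg_mul] using this
  have hexp0 : Tendsto (fun x : ℝ => Real.exp (-(b * x))) atTop (nhds 0) :=
    Real.tendsto_exp_atBot.comp
      (tendsto_neg_atTop_atBot.comp (tendsto_id.const_mul_atTop hb))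
  have htend : Tendsto (fun x => -(Real.exp (-(b * x)) / b)) atTop (nhds 0) := by
    simpa using (hexp0.div_const b).neg
  rw [integral_Ioi_of_hasDerivAt_of_tendsto' hderiv hint htend]
  ring

lemma my_osc_bound {b : ℝ} (hb : 0 < b) (ω t : ℝ) :
    |∫ τ in Set.Ioi t, Real.exp (-(b * τ)) * Real.cos (ω * (t - τ))| ≤
      Real.exp (-(b * t)) / b := by
  have hint : IntegrableOn (fun x => Real.exp (-(b * x))) (Set.Ioi t) := by
    have := exp_neg_integrableOn_Ioi t hb
    simpa [neg_mul] using this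
  have hcont : Continuous (fun τ => Real.exp (-(b * τ)) * Real.cos (ω * (t - τ))) := by
    fun_prop
  have hbnd : ∀ τ : ℝ, ‖Real.exp (-(b * τ)) * Real.cos (ω * (t - τ))‖ ≤
      Real.exp (-(b * τ)) := by
    intro τ
    rw [norm_mul, Real.norm_eq_abs, Real.norm_eq_abs, abs_of_pos (Real.exp_pos _)]
    calc Real.exp (-(b * τ)) * |Real.cos (ω * (t - τ))| ≤ Real.exp (-(b * τ)) * 1 := by
          exact mul_le_mul_of_nonneg_left (Real.abs_cos_le_one _) (Real.exp_pos _).le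
      _ = Real.exp (-(b * τ)) := mul_one _
  have hintf : IntegrableOn (fun τ => Real.exp (-(b * τ)) * Real.cos (ω * (t - τ)))
      (Set.Ioi t) := by
    refine Integrable.mono' hint hcont.aestronglyMeasurable ?_
    exact Filter.Eventually.of_forall hbnd
  rw [← Real.norm_eq_abs]
  calc ‖∫ τ in Set.Ioi t, Real.exp (-(b * τ)) * Real.cos (ω * (t - τ))‖
      ≤ ∫ τ in Set.Ioi t, ‖Real.exp (-(b * τ)) * Real.cos (ω * (t - τ))‖ :=
        norm_integral_le_integral_norm _
    _ ≤ ∫ τ in Set.Ioi t, Real.exp (-(b * τ)) :=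
        integral_mono hintf.norm hint hbnd
    _ = Real.exp (-(b * t)) / b := my_integral_exp_neg_mul_Ioi hb t

/-- Remainder estimate in the case `α = 1` of the generalised wear model: the `ℓ²` norm of
the remainder coefficients decays like `exp (-β₁ t)`. The sequences are indexed by `ℕ`,
with index `0` playing the role of the first index `k = 1`. -/
theorem remainder_decay_exponential (μ η ν ω a PΔ : ℝ)
    (hμ : 0 ≤ μ) (hη : 0 < η) (hν : 0 < ν) (hω : 0 < ω) (ha : 0 < a)
    (σ : ℕ → ℝ) (hσpos : ∀ k, 0 < σ k) (hσmono : ∀ k, σ (k + 1) ≤ σ k)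
    (d₀ l : ℕ → ℝ)
    (hd₀ : Summable (fun k => (d₀ k) ^ 2)) (hl : Summable (fun k => (l k) ^ 2))
    (β : ℕ → ℝ) (hβ : ∀ k, β k = μ + ν / (η + σ k))
    (r : ℕ → ℝ → ℝ)
    (hr : ∀ k t, 0 ≤ t → r k t =
      ν / (μ * (η + σ k) + ν) * (d₀ k + PΔ * l k / (2 * a * (η + σ k))) *
          Real.exp (-(β k * t))
        + l k * PΔ * ν / (2 * a * (η + σ k) ^ 2) *
            ∫ τ in Set.Ioi t, Real.exp (-(β k * τ)) * Real.cos (ω * (t - τ))) :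
    ∃ C > (0 : ℝ), ∃ T > (0 : ℝ), ∀ t ≥ T,
      Summable (fun k => (r k t) ^ 2) ∧
      (∑' k, (r k t) ^ 2) ^ ((1 : ℝ) / 2) ≤ C * Real.exp (-((μ + ν / (η + σ 0)) * t)) := by
  set b : ℝ := μ + ν / (η + σ 0) with hbdef
  have hηk : ∀ k, 0 < η + σ k := fun k => add_pos hη (hσpos k)
  have hb : 0 < b := by
    have h0 : 0 < ν / (η + σ 0) := div_pos hν (hηk 0)
    rw [hbdef]
    linarith
  have hσ0 : ∀ k, σ k ≤ σ 0 := by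
    intro k
    induction k with
    | zero => exact le_rfl
    | succ n ih => exact (hσmono n).trans ih
  have hβge : ∀ k, b ≤ β k := by
    intro k
    rw [hβ k, hbdef]
    have : ν / (η + σ 0) ≤ ν / (η + σ k) :=
      div_le_div_of_nonneg_left hν.le (hηk k) (by linarith [hσ0 k])
    linarith
  have hβpos : ∀ k, 0 < β k := fun k => hb.trans_le (hβge k)
  -- the constant in the pointwise bound
  set c : ℝ := |PΔ| / (2 * a * η) + |PΔ| * ν / (2 * a * η ^ 2) / b with hcdef
  have hc : 0 ≤ c := by positivity
  -- pointwise bound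
  have hM : ∀ k, ∀ t : ℝ, 0 ≤ t →
      |r k t| ≤ (|d₀ k| + c * |l k|) * Real.exp (-(b * t)) := by
    intro k t ht
    have hηs := hηk k
    have hden : 0 < μ * (η + σ k) + ν := by
      have := mul_nonneg hμ hηs.le; linarith
    have hexple : Real.exp (-(β k * t)) ≤ Real.exp (-(b * t)) := by
      apply Real.exp_le_exp.mpr
      have := mul_le_mul_of_nonneg_right (hβge k) ht
      linarith
    rw [hr k t ht]
    refine (abs_add_le _ _).trans ?_
    have e1 : |ν / (μ * (η + σ k) + ν) * (d₀ k + PΔ * l k / (2 * a * (η + σ k))) *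
        Real.exp (-(β k * t))| ≤
        1 * (|d₀ k| + |PΔ| * |l k| / (2 * a * η)) * Real.exp (-(b * t)) := by
      rw [abs_mul, abs_mul]
      have h1 : |ν / (μ * (η + σ k) + ν)| ≤ 1 := by
        rw [abs_of_pos (by positivity), div_le_one hden]
        have := mul_nonneg hμ hηs.le; linarith
      have h2 : |d₀ k + PΔ * l k / (2 * a * (η + σ k))| ≤
          |d₀ k| + |PΔ| * |l k| / (2 * a * η) := by
        refine (abs_add_le _ _).trans ?_
        have habs : |PΔ * l k / (2 * a * (η + σ k))| = |PΔ| * |l k| / (2 * a * (η + σ k)) := by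
          rw [abs_div, abs_mul,
            abs_of_pos (show (0:ℝ) < 2 * a * (η + σ k) by positivity)]
        rw [habs]
        have hle : |PΔ| * |l k| / (2 * a * (η + σ k)) ≤ |PΔ| * |l k| / (2 * a * η) :=
          div_le_div_of_nonneg_left (by positivity) (by positivity)
            (by nlinarith [hσpos k])
        linarith
      have h3 : |Real.exp (-(β k * t))| ≤ Real.exp (-(b * t)) := by
        rw [abs_of_pos (Real.exp_pos _)]; exact hexple
      have hstep : |ν / (μ * (η + σ k) + ν)| * |d₀ k + PΔ * l k / (2 * a * (η + σ k))| ≤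
          1 * (|d₀ k| + |PΔ| * |l k| / (2 * a * η)) :=
        mul_le_mul h1 h2 (abs_nonneg _) zero_le_one
      exact mul_le_mul hstep h3 (abs_nonneg _) (by positivity)
    have e2 : |l k * PΔ * ν / (2 * a * (η + σ k) ^ 2) *
        ∫ τ in Set.Ioi t, Real.exp (-(β k * τ)) * Real.cos (ω * (t - τ))| ≤
        (|l k| * |PΔ| * ν / (2 * a * η ^ 2)) * (Real.exp (-(b * t)) / b) := by
      rw [abs_mul]
      have hcoef : |l k * PΔ * ν / (2 * a * (η + σ k) ^ 2)| ≤
          |l k| * |PΔ| * ν / (2 * a * η ^ 2) := by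
        rw [abs_div, abs_mul, abs_mul, abs_of_pos hν,
          abs_of_pos (show (0:ℝ) < 2 * a * (η + σ k) ^ 2 by positivity)]
        exact div_le_div_of_nonneg_left (by positivity) (by positivity)
          (by nlinarith [mul_nonneg ha.le (mul_nonneg (hσpos k).le
            (by linarith [hσpos k] : (0:ℝ) ≤ 2 * η + σ k))])
      have hI : |∫ τ in Set.Ioi t, Real.exp (-(β k * τ)) * Real.cos (ω * (t - τ))| ≤
          Real.exp (-(b * t)) / b := by
        refine (my_osc_bound (hβpos k) ω t).trans ?_
        exact div_le_div₀ (Real.exp_pos _).le hexple hb (hβge k)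
      exact mul_le_mul hcoef hI (abs_nonneg _) (by positivity)
    refine (add_le_add e1 e2).trans_eq ?_
    rw [hcdef]
    ring
  refine ⟨Real.sqrt (∑' k, 2 * ((d₀ k) ^ 2 + c ^ 2 * (l k) ^ 2)) + 1, by positivity, 1,
    one_pos, ?_⟩
  intro t ht
  have ht0 : (0 : ℝ) ≤ t := le_trans zero_le_one ht
  set e : ℝ := Real.exp (-(b * t)) with hedef
  have he : 0 < e := Real.exp_pos _
  have hgsum : Summable (fun k => 2 * ((d₀ k) ^ 2 + c ^ 2 * (l k) ^ 2)) :=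
    (hd₀.add (hl.mul_left (c ^ 2))).mul_left 2
  have hptsq : ∀ k, (r k t) ^ 2 ≤ 2 * ((d₀ k) ^ 2 + c ^ 2 * (l k) ^ 2) * e ^ 2 := by
    intro k
    have h1 := hM k t ht0
    have h2 : (r k t) ^ 2 ≤ ((|d₀ k| + c * |l k|) * e) ^ 2 := by
      rw [← sq_abs (r k t)]
      exact pow_le_pow_left₀ (abs_nonneg _) h1 2
    refine h2.trans ?_
    have hd := abs_nonneg (d₀ k)
    have hlk := abs_nonneg (l k)
    have : ((|d₀ k| + c * |l k|)) ^ 2 ≤ 2 * ((d₀ k) ^ 2 + c ^ 2 * (l k) ^ 2) := by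
      have h3 : |d₀ k| ^ 2 = (d₀ k) ^ 2 := sq_abs _
      have h4 : |l k| ^ 2 = (l k) ^ 2 := sq_abs _
      nlinarith [sq_nonneg (|d₀ k| - c * |l k|)]
    calc ((|d₀ k| + c * |l k|) * e) ^ 2 = (|d₀ k| + c * |l k|) ^ 2 * e ^ 2 := by ring
      _ ≤ 2 * ((d₀ k) ^ 2 + c ^ 2 * (l k) ^ 2) * e ^ 2 := by
          exact mul_le_mul_of_nonneg_right this (sq_nonneg e)
  have hsummable : Summable (fun k => (r k t) ^ 2) := by
    refine Summable.of_nonneg_of_le (fun k => sq_nonneg _) hptsq ?_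
    exact hgsum.mul_right _
  refine ⟨hsummable, ?_⟩
  have htsumle : (∑' k, (r k t) ^ 2) ≤
      (∑' k, 2 * ((d₀ k) ^ 2 + c ^ 2 * (l k) ^ 2)) * e ^ 2 := by
    rw [← tsum_mul_right]
    exact Summable.tsum_le_tsum hptsq hsummable (hgsum.mul_right _)
  have htsumnn : 0 ≤ ∑' k, (r k t) ^ 2 := tsum_nonneg fun k => sq_nonneg _
  have hSnn : 0 ≤ ∑' k, 2 * ((d₀ k) ^ 2 + c ^ 2 * (l k) ^ 2) :=
    tsum_nonneg fun k => by positivity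
  calc (∑' k, (r k t) ^ 2) ^ ((1 : ℝ) / 2) =
        Real.sqrt (∑' k, (r k t) ^ 2) := (Real.sqrt_eq_rpow _).symm
    _ ≤ Real.sqrt ((∑' k, 2 * ((d₀ k) ^ 2 + c ^ 2 * (l k) ^ 2)) * e ^ 2) :=
        Real.sqrt_le_sqrt htsumle
    _ = Real.sqrt (∑' k, 2 * ((d₀ k) ^ 2 + c ^ 2 * (l k) ^ 2)) * e := by
        rw [Real.sqrt_mul hSnn, Real.sqrt_sq he.le]
    _ ≤ (Real.sqrt (∑' k, 2 * ((d₀ k) ^ 2 + c ^ 2 * (l k) ^ 2)) + 1) * e := by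
        nlinarith [Real.sqrt_nonneg (∑' k, 2 * ((d₀ k) ^ 2 + c ^ 2 * (l k) ^ 2))]
end
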